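/- arXiv:1011.3329 — 3 statements merged into one kernel-verified Lean document; each statement's English description precedes it below -/
import Mathlib

section
/- For every strict partition λ, one has Σ_{κ: κ ↘ λ} q_α(κ/λ)² − Σ_{μ: μ ↗ λ} q_α(λ/μ)² = 2|λ| + α/2, where q_α(i,j)² = 2^{−δ(j−i)} ( (j−i)(j−i+1) + α ), the sums run over strict partitions κ obtained from λ by adding one box and μ obtained from λ by removing one box, and for a box □ = (i,j) in row i and column j, δ(j−i) is 1 if j = i and 0 otherwise. -/
open scoped BigOperators

/-- A strict partition: a strictly decreasing list of positive integers. -/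
def SPart : Type := {l : List ℕ // l.Pairwise (· > ·) ∧ ∀ x ∈ l, 0 < x}

namespace SPart

/-- The weight `|λ|`: the sum of the parts. -/
def weight (lam : SPart) : ℕ := lam.1.sum

/-- The shifted Young diagram of a strict partition: row `k` (1-indexed) has
`λ_k` boxes `(k, j)` with `k ≤ j < k + λ_k`. -/
def diagram (lam : SPart) : Set (ℕ × ℕ) :=
  {p | ∃ k : Fin lam.1.length,
    p.1 = (k : ℕ) + 1 ∧ (k : ℕ) + 1 ≤ p.2 ∧ p.2 < (k : ℕ) + 1 + lam.1.get k}

/-- `AddBox μ λ b`: the shifted diagram of `λ` is obtained from that of `μ` by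
adding the single box `b`. -/
def AddBox (mu lam : SPart) (b : ℕ × ℕ) : Prop :=
  b ∉ mu.diagram ∧ lam.diagram = insert b mu.diagram

/-- `Covers μ λ`: `λ` is obtained from `μ` by adding one box (an edge `μ ↗ λ`
of the Schur graph). -/
def Covers (mu lam : SPart) : Prop := ∃ b, AddBox mu lam b

/-- The empty strict partition. -/
def empty : SPart := ⟨[], List.Pairwise.nil, by simp⟩

end SPart

/-- `q_α(i,j)² = 2^{-δ(j-i)} ((j-i)(j-i+1) + α)` for a box `b = (i,j)`. -/
noncomputable def qsq (α : ℝ) (b : ℕ × ℕ) : ℝ :=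
  (if b.2 = b.1 then (2 : ℝ)⁻¹ else 1) *
    (((b.2 : ℝ) - (b.1 : ℝ)) * (((b.2 : ℝ) - (b.1 : ℝ)) + 1) + α)

/-!
A box added to row `k` of `λ` has content (column minus row) `λ_k`, a box removed from row `k`
has content `λ_k - 1`, and `q_α²` depends on the content `c` only: it is `f c = α/2` for `c = 0`
and `c(c+1) + α` otherwise. Row `k` has a removable box and row `k + 1` an addable one exactly
when `λ_k ≥ λ_{k+1} + 2`; pairing the two, each row `k` contributes
`f λ_{k+1} - f λ_k + 2λ_k` (also when `λ_k = 1` and only the removable box exists, since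
`f 1 - f 0 = 2 + α/2`). Together with the addable box of the first row the sum telescopes to
`f 0 + 2|λ| = 2|λ| + α/2`.
-/

open Finset

lemma finsum_mem_eq_sum_of_snd_image {ι α β M : Type*} [AddCommMonoid M] {S : Set (α × β)}
    (hS : S.InjOn Prod.snd) {s : Finset ι} {g : ι → β} (hg : Set.InjOn g s)
    (himg : Prod.snd '' S = g '' s) (F : β → M) :
    ∑ᶠ p ∈ S, F p.2 = ∑ k ∈ s, F (g k) := by
  rw [← finsum_mem_image hS, himg, finsum_mem_image hg, finsum_mem_coe_finset]

namespace SPart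

/-- Rows are indexed from `0` here: `lam.row k` is the length of row `k + 1` of the diagram,
and `0` below the last row. -/
def row (lam : SPart) (k : ℕ) : ℕ := lam.1.getD k 0

lemma row_eq_zero {lam : SPart} {k : ℕ} (h : lam.1.length ≤ k) : lam.row k = 0 :=
  List.getD_eq_default _ _ h

lemma row_pos_iff {lam : SPart} {k : ℕ} : 0 < lam.row k ↔ k < lam.1.length := by
  refine ⟨fun h => ?_, fun h => ?_⟩
  · by_contra hk
    rw [row_eq_zero (not_lt.1 hk)] at h
    exact h.false
  · rw [row, List.getD_eq_getElem _ _ h]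
    exact lam.2.2 _ (List.getElem_mem h)

lemma row_lt_row_of_pos {lam : SPart} {i j : ℕ} (hij : i < j) (hj : 0 < lam.row j) :
    lam.row j < lam.row i := by
  have hj' := row_pos_iff.1 hj
  rw [row, row, List.getD_eq_getElem _ _ hj', List.getD_eq_getElem _ _ (hij.trans hj')]
  exact List.pairwise_iff_getElem.1 lam.2.1 i j (hij.trans hj') hj' hij

lemma row_antitone (lam : SPart) : Antitone lam.row := by
  intro i j hij
  rcases Nat.eq_zero_or_pos (lam.row j) with hj | hj
  · omega
  · rcases hij.lt_or_eq with hij | rfl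
    · exact (row_lt_row_of_pos hij hj).le
    · exact le_rfl

lemma weight_eq_sum_row (lam : SPart) : lam.weight = ∑ k ∈ range lam.1.length, lam.row k := by
  rw [weight, ← Fin.sum_univ_getElem, ← Fin.sum_univ_eq_sum_range]
  exact Fintype.sum_congr _ _ fun k => (List.getD_eq_getElem _ _ k.2).symm

lemma ext_row {lam mu : SPart} (h : lam.row = mu.row) : lam = mu := by
  have hlen : lam.1.length = mu.1.length := by
    have hiff : ∀ k, k < lam.1.length ↔ k < mu.1.length := fun k => by
      rw [← row_pos_iff, ← row_pos_iff, h]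
    exact le_antisymm (not_lt.1 fun hl => ((hiff _).1 hl).false)
      (not_lt.1 fun hl => ((hiff _).2 hl).false)
  refine Subtype.ext (List.ext_getElem hlen fun k hk hk' => ?_)
  have := congrFun h k
  rwa [row, row, List.getD_eq_getElem _ _ hk, List.getD_eq_getElem _ _ hk'] at this

lemma exists_row_eq {g : ℕ → ℕ} (hg : ∀ i j, i < j → 0 < g j → g j < g i)
    (hzero : ∃ n, g n = 0) : ∃ lam : SPart, lam.row = g := by
  classical
  set n := Nat.find hzero
  have hpos : ∀ k, 0 < g k ↔ k < n := fun k => by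
    refine ⟨fun hk => ?_, fun hk => Nat.pos_of_ne_zero (Nat.find_min hzero hk)⟩
    by_contra hkn
    rcases (not_lt.1 hkn).lt_or_eq with hnk | hnk
    · have := hg n k hnk hk
      rw [Nat.find_spec hzero] at this
      exact this.not_ge (Nat.zero_le _)
    · exact hk.ne' (hnk ▸ Nat.find_spec hzero)
  refine ⟨⟨(List.range n).map g, ?_, ?_⟩, funext fun k => ?_⟩
  · refine List.pairwise_map.2 (List.pairwise_lt_range.imp_of_mem fun _ hb hab => ?_)
    exact hg _ _ hab ((hpos _).2 (List.mem_range.1 hb))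
  · simp only [List.mem_map, List.mem_range]
    rintro _ ⟨k, hk, rfl⟩
    exact (hpos k).2 hk
  · by_cases hk : k < n
    · simp [row, List.getD_eq_getElem?_getD, List.getElem?_range hk]
    · show List.getD _ k 0 = g k
      rw [List.getD_eq_default _ _ (by simpa using not_lt.1 hk)]
      exact (Nat.eq_zero_of_not_pos fun h => hk ((hpos k).1 h)).symm

lemma mem_diagram {lam : SPart} {p : ℕ × ℕ} :
    p ∈ lam.diagram ↔ 1 ≤ p.1 ∧ p.1 ≤ p.2 ∧ p.2 < p.1 + lam.row (p.1 - 1) := by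
  constructor
  · rintro ⟨k, h1, h2, h3⟩
    rw [h1, Nat.add_sub_cancel, row, List.getD_eq_getElem _ _ k.2]
    exact ⟨by omega, h2, by simpa using h3⟩
  · rintro ⟨h1, h2, h3⟩
    have hk : p.1 - 1 < lam.1.length := row_pos_iff.1 (by omega)
    rw [row, List.getD_eq_getElem _ _ hk] at h3
    exact ⟨⟨p.1 - 1, hk⟩, by simp; omega, by simp; omega, by simp; omega⟩

lemma mem_diagram_succ {lam : SPart} {k y : ℕ} :
    (k + 1, y) ∈ lam.diagram ↔ k + 1 ≤ y ∧ y < k + 1 + lam.row k := by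
  simp [mem_diagram]

lemma exists_eq_succ_of_mem_diagram {lam : SPart} {p : ℕ × ℕ} (h : p ∈ lam.diagram) :
    ∃ k c, p = (k + 1, c) :=
  ⟨p.1 - 1, p.2, Prod.ext (by have := (mem_diagram.1 h).1; simp; omega) rfl⟩

lemma diagram_injective : Function.Injective diagram := by
  intro lam mu h
  refine ext_row (funext fun k => ?_)
  have h1 := fun y => (Set.ext_iff.1 h (k + 1, y))
  simp only [mem_diagram_succ] at h1
  have := h1 (k + 1 + lam.row k)
  have := h1 (k + 1 + mu.row k)
  omega

lemma addBox_succ_iff {mu lam : SPart} {k c : ℕ} :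
    AddBox mu lam (k + 1, c) ↔
      c = k + 1 + mu.row k ∧ lam.row = Function.update mu.row k (mu.row k + 1) := by
  constructor
  · rintro ⟨hb, hlam⟩
    have hrow : ∀ j y, (j + 1 ≤ y ∧ y < j + 1 + lam.row j) ↔
        ((j + 1, y) = (k + 1, c) ∨ (j + 1 ≤ y ∧ y < j + 1 + mu.row j)) := fun j y => by
      rw [← mem_diagram_succ, ← mem_diagram_succ, hlam, Set.mem_insert_iff]
    rw [mem_diagram_succ] at hb
    have hk := hrow k
    simp only [Prod.mk.injEq, true_and] at hk
    have := hk c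
    have := hk (k + 1 + mu.row k)
    have := hk (k + 2 + mu.row k)
    refine ⟨by omega, funext fun j => ?_⟩
    rcases eq_or_ne j k with rfl | hjk
    · rw [Function.update_self]
      omega
    · rw [Function.update_of_ne hjk]
      have hj : ∀ y, (j + 1 ≤ y ∧ y < j + 1 + lam.row j) ↔
          (j + 1 ≤ y ∧ y < j + 1 + mu.row j) := fun y => by simpa [hjk] using hrow j y
      have := hj (j + 1 + lam.row j)
      have := hj (j + 1 + mu.row j)
      omega
  · rintro ⟨rfl, hrow⟩
    refine ⟨by simp [mem_diagram_succ], Set.ext fun ⟨i, y⟩ => ?_⟩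
    rcases i with _ | j
    · simp [mem_diagram]
    · rw [Set.mem_insert_iff, mem_diagram_succ, mem_diagram_succ, hrow, Prod.mk.injEq]
      rcases eq_or_ne j k with rfl | hjk
      · rw [Function.update_self]
        omega
      · rw [Function.update_of_ne hjk]
        omega

lemma AddBox.diagram_eq_diff {mu lam : SPart} {b : ℕ × ℕ} (h : AddBox mu lam b) :
    mu.diagram = lam.diagram \ {b} := by
  rw [h.2, Set.insert_sdiff_self_of_notMem h.1]

def IsAddableRow (lam : SPart) (k : ℕ) : Prop := k = 0 ∨ lam.row k + 2 ≤ lam.row (k - 1)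

def IsRemovableRow (lam : SPart) (k : ℕ) : Prop :=
  lam.row k = 1 ∨ lam.row (k + 1) + 2 ≤ lam.row k

instance (lam : SPart) : DecidablePred lam.IsAddableRow :=
  fun _ => inferInstanceAs (Decidable (_ ∨ _))

instance (lam : SPart) : DecidablePred lam.IsRemovableRow :=
  fun _ => inferInstanceAs (Decidable (_ ∨ _))

lemma IsAddableRow.le_length {lam : SPart} {k : ℕ} (h : lam.IsAddableRow k) :
    k ≤ lam.1.length := by
  by_contra hk
  rcases h with h | h
  · omega
  · rw [row_eq_zero (by omega), row_eq_zero (by omega)] at h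
    omega

lemma IsRemovableRow.row_pos {lam : SPart} {k : ℕ} (h : lam.IsRemovableRow k) :
    0 < lam.row k := by
  rcases h with h | h <;> omega

lemma IsAddableRow.exists_addBox {lam : SPart} {k : ℕ} (h : lam.IsAddableRow k) :
    ∃ kap, AddBox lam kap (k + 1, k + 1 + lam.row k) := by
  set g := Function.update lam.row k (lam.row k + 1) with hg
  have hdec : ∀ i j, i < j → 0 < g j → g j < g i := by
    intro i j hij hj
    rcases eq_or_ne j k with rfl | hjk
    · have hgap : lam.row j + 2 ≤ lam.row (j - 1) := h.resolve_left (by omega)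
      have := lam.row_antitone (show i ≤ j - 1 by omega)
      simp only [g, Function.update_self, Function.update_of_ne hij.ne]
      omega
    · simp only [g, Function.update_of_ne hjk] at hj ⊢
      have := row_lt_row_of_pos hij hj
      rcases eq_or_ne i k with rfl | hik
      · rw [Function.update_self]; omega
      · rw [Function.update_of_ne hik]; omega
  have hzero : g (lam.1.length + 1) = 0 := by
    rw [hg, Function.update_of_ne (by have := h.le_length; omega), row_eq_zero (by omega)]
  obtain ⟨kap, hkap⟩ := exists_row_eq hdec ⟨_, hzero⟩
  exact ⟨kap, addBox_succ_iff.2 ⟨rfl, hkap⟩⟩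

lemma IsRemovableRow.exists_addBox {lam : SPart} {k : ℕ} (h : lam.IsRemovableRow k) :
    ∃ mu, AddBox mu lam (k + 1, k + lam.row k) := by
  have hk := h.row_pos
  set g := Function.update lam.row k (lam.row k - 1) with hg
  have hdec : ∀ i j, i < j → 0 < g j → g j < g i := by
    intro i j hij hj
    rcases eq_or_ne j k with rfl | hjk
    · have := row_lt_row_of_pos hij hk
      simp only [g, Function.update_self, Function.update_of_ne hij.ne]
      omega
    · simp only [g, Function.update_of_ne hjk] at hj ⊢
      have := row_lt_row_of_pos hij hj
      rcases eq_or_ne i k with rfl | hik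
      · have := lam.row_antitone (show i + 1 ≤ j by omega)
        rw [Function.update_self]
        rcases h with h | h <;> omega
      · rw [Function.update_of_ne hik]; omega
  have hzero : g lam.1.length = 0 := by
    rw [hg, Function.update_of_ne (row_pos_iff.1 hk).ne', row_eq_zero le_rfl]
  obtain ⟨mu, hmu⟩ := exists_row_eq hdec ⟨_, hzero⟩
  have hmuk : mu.row k = lam.row k - 1 := by rw [hmu, hg, Function.update_self]
  refine ⟨mu, addBox_succ_iff.2 ⟨by omega, ?_⟩⟩
  rw [hmuk, Nat.sub_add_cancel hk, hmu, hg, Function.update_idem, Function.update_eq_self]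

lemma AddBox.exists_isAddableRow {lam kap : SPart} {b : ℕ × ℕ} (h : AddBox lam kap b) :
    ∃ k, lam.IsAddableRow k ∧ b = (k + 1, k + 1 + lam.row k) := by
  obtain ⟨k, c, rfl⟩ := exists_eq_succ_of_mem_diagram (h.2 ▸ Set.mem_insert b lam.diagram)
  obtain ⟨rfl, hrow⟩ := addBox_succ_iff.1 h
  refine ⟨k, ?_, rfl⟩
  rcases Nat.eq_zero_or_pos k with hk | hk
  · exact Or.inl hk
  · have hkk : kap.row k = lam.row k + 1 := by rw [hrow, Function.update_self]
    have hk1 : kap.row (k - 1) = lam.row (k - 1) := by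
      rw [hrow, Function.update_of_ne (by omega)]
    have := row_lt_row_of_pos (show k - 1 < k by omega) (show 0 < kap.row k by omega)
    exact Or.inr (by omega)

lemma AddBox.exists_isRemovableRow {mu lam : SPart} {b : ℕ × ℕ} (h : AddBox mu lam b) :
    ∃ k, lam.IsRemovableRow k ∧ b = (k + 1, k + lam.row k) := by
  obtain ⟨k, c, rfl⟩ := exists_eq_succ_of_mem_diagram (h.2 ▸ Set.mem_insert b mu.diagram)
  obtain ⟨rfl, hrow⟩ := addBox_succ_iff.1 h
  have hkk : lam.row k = mu.row k + 1 := by rw [hrow, Function.update_self]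
  have hk1 : lam.row (k + 1) = mu.row (k + 1) := by rw [hrow, Function.update_of_ne (by omega)]
  refine ⟨k, ?_, Prod.ext rfl (by simp only; omega)⟩
  rcases Nat.eq_zero_or_pos (mu.row (k + 1)) with h0 | h0
  · rcases Nat.eq_zero_or_pos (mu.row k) with h0' | h0'
    · exact Or.inl (by omega)
    · exact Or.inr (by omega)
  · have := row_lt_row_of_pos (Nat.lt_add_one k) h0
    exact Or.inr (by omega)

noncomputable def qsqContent (α : ℝ) (c : ℕ) : ℝ :=
  if c = 0 then α / 2 else c * (c + 1) + α

lemma qsq_eq_qsqContent (α : ℝ) {i j : ℕ} (h : i ≤ j) :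
    qsq α (i, j) = qsqContent α (j - i) := by
  rw [qsq, qsqContent]
  rcases h.eq_or_lt with rfl | hij
  · simp only [↓reduceIte, sub_self, zero_add, mul_one, tsub_self]
    ring
  · rw [if_neg hij.ne', if_neg (by omega), Nat.cast_sub h]
    ring

lemma qsqContent_sub_qsqContent_pred (α : ℝ) {c : ℕ} (hc : 2 ≤ c) :
    qsqContent α c - qsqContent α (c - 1) = 2 * c := by
  rw [qsqContent, qsqContent, if_neg (by omega), if_neg (by omega), Nat.cast_sub (by omega)]
  push_cast
  ring

lemma finsum_qsq_addable (α : ℝ) (lam : SPart) :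
    ∑ᶠ p ∈ {p : SPart × (ℕ × ℕ) | AddBox lam p.1 p.2}, qsq α p.2 =
      ∑ k ∈ range (lam.1.length + 1),
        if lam.IsAddableRow k then qsqContent α (lam.row k) else 0 := by
  have hinj : Set.InjOn Prod.snd {p : SPart × (ℕ × ℕ) | AddBox lam p.1 p.2} := by
    rintro ⟨kap, b⟩ (h : AddBox lam kap b) ⟨kap', b'⟩ (h' : AddBox lam kap' b')
      (rfl : b = b')
    rw [diagram_injective (h.2.trans h'.2.symm)]
  have himg : Prod.snd '' {p : SPart × (ℕ × ℕ) | AddBox lam p.1 p.2} =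
      (fun k => (k + 1, k + 1 + lam.row k)) ''
        ↑((range (lam.1.length + 1)).filter lam.IsAddableRow) := by
    ext b
    simp only [Set.mem_image, Set.mem_ofPred_eq, Finset.coe_filter, Finset.mem_range]
    constructor
    · rintro ⟨⟨kap, b⟩, h, rfl⟩
      obtain ⟨k, hk, rfl⟩ := h.exists_isAddableRow
      exact ⟨k, ⟨Nat.lt_succ_of_le hk.le_length, hk⟩, rfl⟩
    · rintro ⟨k, ⟨-, hk⟩, rfl⟩
      obtain ⟨kap, hkap⟩ := hk.exists_addBox
      exact ⟨(kap, _), hkap, rfl⟩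
  rw [finsum_mem_eq_sum_of_snd_image hinj (fun k _ k' _ h => by simpa using congrArg Prod.fst h)
    himg, sum_filter]
  refine sum_congr rfl fun k _ => ?_
  rw [qsq_eq_qsqContent α (by omega), Nat.add_sub_cancel_left]

lemma finsum_qsq_removable (α : ℝ) (lam : SPart) :
    ∑ᶠ p ∈ {p : SPart × (ℕ × ℕ) | AddBox p.1 lam p.2}, qsq α p.2 =
      ∑ k ∈ range lam.1.length,
        if lam.IsRemovableRow k then qsqContent α (lam.row k - 1) else 0 := by
  have hinj : Set.InjOn Prod.snd {p : SPart × (ℕ × ℕ) | AddBox p.1 lam p.2} := by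
    rintro ⟨mu, b⟩ (h : AddBox mu lam b) ⟨mu', b'⟩ (h' : AddBox mu' lam b') (rfl : b = b')
    rw [diagram_injective (h.diagram_eq_diff.trans h'.diagram_eq_diff.symm)]
  have himg : Prod.snd '' {p : SPart × (ℕ × ℕ) | AddBox p.1 lam p.2} =
      (fun k => (k + 1, k + lam.row k)) ''
        ↑((range lam.1.length).filter lam.IsRemovableRow) := by
    ext b
    simp only [Set.mem_image, Set.mem_ofPred_eq, Finset.coe_filter, Finset.mem_range]
    constructor
    · rintro ⟨⟨mu, b⟩, h, rfl⟩
      obtain ⟨k, hk, rfl⟩ := h.exists_isRemovableRow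
      exact ⟨k, ⟨row_pos_iff.1 hk.row_pos, hk⟩, rfl⟩
    · rintro ⟨k, ⟨-, hk⟩, rfl⟩
      obtain ⟨mu, hmu⟩ := hk.exists_addBox
      exact ⟨(mu, _), hmu, rfl⟩
  rw [finsum_mem_eq_sum_of_snd_image hinj (fun k _ k' _ h => by simpa using congrArg Prod.fst h)
    himg, sum_filter]
  refine sum_congr rfl fun k _ => ?_
  split_ifs with hk
  · have := hk.row_pos
    rw [qsq_eq_qsqContent α (by omega)]
    congr 1
    omega
  · rfl

lemma addable_succ_sub_removable (α : ℝ) (lam : SPart) {k : ℕ} (hk : k < lam.1.length) :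
    ((if lam.IsAddableRow (k + 1) then qsqContent α (lam.row (k + 1)) else 0) -
      if lam.IsRemovableRow k then qsqContent α (lam.row k - 1) else 0) =
    qsqContent α (lam.row (k + 1)) - qsqContent α (lam.row k) + 2 * lam.row k := by
  have hpos := row_pos_iff.2 hk
  have hlt : lam.row (k + 1) < lam.row k := by
    rcases Nat.eq_zero_or_pos (lam.row (k + 1)) with h0 | h0
    · omega
    · exact row_lt_row_of_pos (Nat.lt_add_one k) h0
  have hA : lam.IsAddableRow (k + 1) ↔ lam.row (k + 1) + 2 ≤ lam.row k := by
    simp [IsAddableRow]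
  by_cases hgap : lam.row (k + 1) + 2 ≤ lam.row k
  · rw [if_pos (hA.2 hgap), if_pos (show lam.IsRemovableRow k from Or.inr hgap)]
    linarith [qsqContent_sub_qsqContent_pred α (show 2 ≤ lam.row k by omega)]
  · rw [if_neg (mt hA.1 hgap)]
    by_cases h1 : lam.row k = 1
    · rw [if_pos (show lam.IsRemovableRow k from Or.inl h1), h1,
        show lam.row (k + 1) = 0 by omega]
      rw [qsqContent, qsqContent, if_pos rfl, if_neg one_ne_zero]
      push_cast
      ring
    · rw [if_neg (by unfold IsRemovableRow; omega), show lam.row (k + 1) = lam.row k - 1 by omega]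
      linarith [qsqContent_sub_qsqContent_pred α (show 2 ≤ lam.row k by omega)]

lemma sum_addable_sub_sum_removable (α : ℝ) (lam : SPart) :
    (∑ k ∈ range (lam.1.length + 1),
        if lam.IsAddableRow k then qsqContent α (lam.row k) else 0) -
      (∑ k ∈ range lam.1.length,
        if lam.IsRemovableRow k then qsqContent α (lam.row k - 1) else 0) =
    2 * (lam.weight : ℝ) + α / 2 := by
  set m := lam.1.length
  set f := qsqContent α
  calc _ = f (lam.row 0) + ∑ k ∈ range m,
        ((if lam.IsAddableRow (k + 1) then f (lam.row (k + 1)) else 0) -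
          if lam.IsRemovableRow k then f (lam.row k - 1) else 0) := by
        rw [sum_range_succ', sum_sub_distrib, if_pos (show lam.IsAddableRow 0 from Or.inl rfl)]
        ring
    _ = f (lam.row 0) + ∑ k ∈ range m,
        ((f (lam.row (k + 1)) - f (lam.row k)) + 2 * (lam.row k : ℝ)) := by
        congr 1
        exact sum_congr rfl fun k hk => addable_succ_sub_removable α lam (mem_range.1 hk)
    _ = f (lam.row m) + 2 * ∑ k ∈ range m, (lam.row k : ℝ) := by
        rw [sum_add_distrib, sum_range_sub (fun k => f (lam.row k)), ← mul_sum]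
        ring
    _ = 2 * (lam.weight : ℝ) + α / 2 := by
        rw [row_eq_zero le_rfl, weight_eq_sum_row]
        simp only [f, qsqContent, ↓reduceIte, Nat.cast_sum]
        ring

end SPart

/-- for every strict partition `λ`,
`Σ_{κ ↘ λ} q_α(κ/λ)² − Σ_{μ ↗ λ} q_α(λ/μ)² = 2|λ| + α/2`. -/
theorem statement2 (α : ℝ) (lam : SPart) :
    (∑ᶠ p ∈ {p : SPart × (ℕ × ℕ) | SPart.AddBox lam p.1 p.2}, qsq α p.2) -
      (∑ᶠ p ∈ {p : SPart × (ℕ × ℕ) | SPart.AddBox p.1 lam p.2}, qsq α p.2) =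
    2 * (lam.weight : ℝ) + α / 2 := by
  rw [SPart.finsum_qsq_addable, SPart.finsum_qsq_removable]
  exact SPart.sum_addable_sub_sum_removable α lam
end

section
/- Let V be a complex vector space with a symmetric bilinear form ⟨·,·⟩, decomposed as V = V⁻ ⊕ V⁰ ⊕ V⁺ with V⁺ and V⁻ maximal isotropic and V⁰ = ℂv₀ with ⟨v₀,v₀⟩ = 2 and v₀ orthogonal to V⁺ ⊕ V⁻. Let Cl(V) be the Clifford algebra of (V, ⟨·,·⟩) and let F be a linear functional on Cl(V) with F(1) = 1 such that F(f₁⁺⋯f_p⁺ v₀^r f₁⁻⋯f_q⁻) = 0 whenever f_i⁺ ∈ V⁺, f_j⁻ ∈ V⁻, r ≥ 0, and at least one of p, q is nonzero. Then for any 2n elements f₁,...,f_{2n} ∈ V, F(f₁⋯f_{2n}) = Pf(A), where A is the 2n×2n skew-symmetric matrix with entries A_{kj} = F(f_k f_j) for k < j. -/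
/-!
Write `P = f₁ ⋯ f_{2n-1}` and `w = f_{2n}`. Anticommuting `w` through `P` gives
`w P + P w = Σ_k (-1)^(k+1) ⟨w, f_k⟩ P_k`, where `P_k` omits `f_k`. The normal-ordered
monomials `f⁺ ⋯ f⁺ v₀^r f⁻ ⋯ f⁻` span `Cl(V)`, and `F` kills all of them except the powers
of `v₀`; hence `F(x f⁻) = 0`, `F(f⁺ x) = 0` and `F(v₀ x) = F(x v₀)`. In each of these cases
`α F(w x) = β F(x w)` with `α + β ≠ 0`, which turns the anticommutator identity into
`F(P w) = Σ_k (-1)^(k+1) F(f_k w) F(P_k)`. This is linear in `w`, so it holds on all of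
`V⁻ ⊕ ℂv₀ ⊕ V⁺`, and it is the recursion defining the Pfaffian.
-/

open CliffordAlgebra QuadraticMap

/-- The Pfaffian of a `2n × 2n` matrix, defined by the recursive expansion
`Pf(A) = Σ_{k=1}^{2n−1} (−1)^{k+1} A_{k,2n} · Pf(A with rows/columns k, 2n removed)`. -/
def pfaffian {R : Type*} [CommRing R] : (n : ℕ) → Matrix (Fin (2 * n)) (Fin (2 * n)) R → R
  | 0, _ => 1
  | n + 1, A =>
      ∑ k : Fin (2 * n + 1),
        (-1 : R) ^ (k : ℕ) * A k.castSucc (Fin.last (2 * n + 1)) *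
          pfaffian n (A.submatrix (fun i => (k.succAbove i).castSucc)
            (fun i => (k.succAbove i).castSucc))

namespace Matrix

variable {m n R : Type*} [LinearOrder m] [LinearOrder n] [Neg R] [Zero R]

def skewOfUpper (c : n → n → R) : Matrix n n R :=
  of fun k j => if k < j then c k j else if j < k then -c j k else 0

lemma skewOfUpper_apply_of_lt (c : n → n → R) {k j : n} (h : k < j) :
    skewOfUpper c k j = c k j :=
  if_pos h

lemma submatrix_skewOfUpper (c : n → n → R) {e : m → n} (he : StrictMono e) :
    (skewOfUpper c).submatrix e e = skewOfUpper fun i j => c (e i) (e j) := by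
  ext i j
  simp only [skewOfUpper, submatrix_apply, of_apply, he.lt_iff_lt]

end Matrix

lemma Submodule.mem_of_sup_span_singleton_sup_eq_top {R M : Type*} [Semiring R]
    [AddCommMonoid M] [Module R M] {A B W : Submodule R M} {v : M} (h : A ⊔ R ∙ v ⊔ B = ⊤)
    (hA : A ≤ W) (hv : v ∈ W) (hB : B ≤ W) (x : M) : x ∈ W :=
  (sup_le (sup_le hA ((span_singleton_le_iff_mem _ _).2 hv)) hB : _ ≤ W) (h ▸ mem_top)

namespace CliffordAlgebra

variable {R : Type*} [CommRing R] {V : Type*} [AddCommGroup V] [Module R V]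
  {Q : QuadraticForm R V}

variable (Q) in
def ιProd {m : ℕ} (g : Fin m → V) : CliffordAlgebra Q :=
  (List.ofFn fun i => ι Q (g i)).prod

@[simp]
lemma ιProd_zero (g : Fin 0 → V) : ιProd Q g = 1 := rfl

lemma ιProd_succ {m : ℕ} (g : Fin (m + 1) → V) :
    ιProd Q g = ι Q (g 0) * ιProd Q (fun i => g i.succ) := by
  simp [ιProd, List.ofFn_succ]

lemma ιProd_succ' {m : ℕ} (g : Fin (m + 1) → V) :
    ιProd Q g = ιProd Q (fun i => g i.castSucc) * ι Q (g (Fin.last m)) := by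
  rw [ιProd, ιProd, List.ofFn_succ', List.concat_eq_append, List.prod_append,
    List.prod_singleton]

theorem ι_mul_ιProd (w : V) {m : ℕ} (g : Fin (m + 1) → V) :
    ι Q w * ιProd Q g = (-1 : R) ^ (m + 1) • (ιProd Q g * ι Q w) +
      ∑ k : Fin (m + 1), ((-1 : R) ^ (k : ℕ) * polar Q w (g k)) •
        ιProd Q (fun i => g (k.succAbove i)) := by
  induction m with
  | zero =>
    rw [ιProd_succ, ιProd_zero, mul_one, ι_mul_ι_comm, Algebra.algebraMap_eq_smul_one]
    simp only [Fin.sum_univ_succ, Fin.sum_univ_zero, Fin.val_zero, pow_zero, one_mul, ιProd_zero,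
      add_zero, zero_add, pow_one, neg_one_smul]
    abel
  | succ m ih =>
    rw [Fin.sum_univ_succ, ιProd_succ, ← mul_assoc, ι_mul_ι_comm, sub_mul, mul_assoc,
      ih fun i => g i.succ, Algebra.algebraMap_eq_smul_one, smul_one_mul]
    simp only [Fin.val_zero, pow_zero, one_mul, Fin.val_succ,
      ιProd_succ (fun i => g (Fin.succAbove _ i)), Fin.succ_succAbove_zero,
      Fin.succ_succAbove_succ, Fin.zero_succAbove, mul_add, mul_smul_comm, Finset.mul_sum,
      mul_assoc]
    simp only [pow_succ, mul_neg_one, neg_mul, neg_smul, Finset.sum_neg_distrib]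
    module

theorem ι_mul_prod_map_ι_of_polar_eq_zero (w : V) (l : List V)
    (h : ∀ a ∈ l, polar Q w a = 0) :
    ι Q w * (l.map (ι Q)).prod = (-1 : R) ^ l.length • ((l.map (ι Q)).prod * ι Q w) := by
  induction l with
  | nil => simp
  | cons a l ih =>
    rw [List.forall_mem_cons] at h
    rw [List.map_cons, List.prod_cons, ← mul_assoc,
      ι_mul_ι_comm_of_isOrtho (isOrtho_polarBilin.1 h.1), neg_mul, mul_assoc, ih h.2,
      mul_smul_comm, List.length_cons, pow_succ, mul_assoc]
    module

section NormalOrder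

variable {Vp Vm : Submodule R V} (v0 : V)

variable (Q) in
def normalMonomial (lp : List Vp) (r : ℕ) (lq : List Vm) : CliffordAlgebra Q :=
  ((lp.map (↑)).map (ι Q)).prod * ι Q v0 ^ r * ((lq.map (↑)).map (ι Q)).prod

variable (Q Vp Vm) in
def normalMonomials : Set (CliffordAlgebra Q) :=
  Set.range fun x : List Vp × ℕ × List Vm => normalMonomial Q v0 x.1 x.2.1 x.2.2

variable {v0}

lemma normalMonomial_mem_span (lp : List Vp) (r : ℕ) (lq : List Vm) :
    normalMonomial Q v0 lp r lq ∈ Submodule.span R (normalMonomials Q Vp Vm v0) :=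
  Submodule.subset_span ⟨(lp, r, lq), rfl⟩

lemma mul_mem_span_normalMonomials {y : CliffordAlgebra Q}
    (h : ∀ (lp : List Vp) r (lq : List Vm),
      y * normalMonomial Q v0 lp r lq ∈ Submodule.span R (normalMonomials Q Vp Vm v0))
    {x : CliffordAlgebra Q} (hx : x ∈ Submodule.span R (normalMonomials Q Vp Vm v0)) :
    y * x ∈ Submodule.span R (normalMonomials Q Vp Vm v0) := by
  refine (Submodule.span_le (p := (Submodule.span R _).comap (LinearMap.mulLeft R y))).2 ?_ hx
  rintro _ ⟨⟨lp, r, lq⟩, rfl⟩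
  exact h lp r lq

lemma ι_mul_normalMonomial (b : Vp) (lp : List Vp) (r : ℕ) (lq : List Vm) :
    ι Q b * normalMonomial Q v0 lp r lq = normalMonomial Q v0 (b :: lp) r lq := by
  simp only [normalMonomial, List.map_cons, List.prod_cons, mul_assoc]

lemma normalMonomial_mul_ι (lp : List Vp) (r : ℕ) (lq : List Vm) (a : Vm) :
    normalMonomial Q v0 lp r lq * ι Q a = normalMonomial Q v0 lp r (lq ++ [a]) := by
  simp only [normalMonomial, List.map_append, List.prod_append, List.map_cons, List.map_nil,
    List.prod_cons, List.prod_nil, mul_one, mul_assoc]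

lemma ι_mul_normalMonomial_self (hp : ∀ v ∈ Vp, polar Q v0 v = 0)
    (lp : List Vp) (r : ℕ) (lq : List Vm) :
    ι Q v0 * normalMonomial Q v0 lp r lq =
      (-1 : R) ^ lp.length • normalMonomial Q v0 lp (r + 1) lq := by
  have := ι_mul_prod_map_ι_of_polar_eq_zero (Q := Q) v0 (lp.map (↑))
    (by simpa using fun v hv _ => hp v hv)
  rw [List.length_map] at this
  rw [normalMonomial, normalMonomial, ← mul_assoc, ← mul_assoc, this, smul_mul_assoc,
    smul_mul_assoc, mul_assoc _ (ι Q v0), ← pow_succ']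

lemma normalMonomial_mul_ι_self (hm : ∀ v ∈ Vm, polar Q v0 v = 0)
    (lp : List Vp) (r : ℕ) (lq : List Vm) :
    normalMonomial Q v0 lp r lq * ι Q v0 =
      (-1 : R) ^ lq.length • normalMonomial Q v0 lp (r + 1) lq := by
  have := ι_mul_prod_map_ι_of_polar_eq_zero (Q := Q) v0 (lq.map (↑))
    (by simpa using fun v hv _ => hm v hv)
  rw [List.length_map] at this
  have hL : ((lq.map (↑)).map (ι Q)).prod * ι Q v0 =
      (-1 : R) ^ lq.length • (ι Q v0 * ((lq.map (↑)).map (ι Q)).prod) := by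
    rw [this, smul_smul, ← mul_pow, neg_one_mul, neg_neg, one_pow, one_smul]
  rw [normalMonomial, normalMonomial, mul_assoc, hL, mul_smul_comm, ← mul_assoc,
    mul_assoc _ (ι Q v0 ^ r), ← pow_succ]

lemma ι_mul_normalMonomial_mem_span (hm : ∀ v ∈ Vm, polar Q v0 v = 0) (a : Vm)
    (lp : List Vp) (r : ℕ) (lq : List Vm) :
    ι Q a * normalMonomial Q v0 lp r lq ∈ Submodule.span R (normalMonomials Q Vp Vm v0) := by
  induction lp with
  | nil =>
    have hpow := ι_mul_prod_map_ι_of_polar_eq_zero (Q := Q) a (List.replicate r v0)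
      fun x hx => by rw [List.eq_of_mem_replicate hx, polar_comm]; exact hm a a.2
    simp only [List.map_replicate, List.prod_replicate, List.length_replicate] at hpow
    have : ι Q a * normalMonomial Q v0 ([] : List Vp) r lq =
        (-1 : R) ^ r • normalMonomial Q v0 ([] : List Vp) r (a :: lq) := by
      simp only [normalMonomial, List.map_nil, List.prod_nil, one_mul, List.map_cons,
        List.prod_cons, ← mul_assoc, hpow, smul_mul_assoc]
    rw [this]
    exact Submodule.smul_mem _ _ (normalMonomial_mem_span _ _ _)
  | cons b lp ih =>
    rw [← ι_mul_normalMonomial, ← mul_assoc, ι_mul_ι_comm, sub_mul, mul_assoc,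
      Algebra.algebraMap_eq_smul_one, smul_one_mul]
    exact sub_mem (Submodule.smul_mem _ _ (normalMonomial_mem_span _ _ _))
      (mul_mem_span_normalMonomials (fun lp r lq => by
        rw [ι_mul_normalMonomial]; exact normalMonomial_mem_span _ _ _) ih)

theorem span_normalMonomials_eq_top (hp : ∀ v ∈ Vp, polar Q v0 v = 0)
    (hm : ∀ v ∈ Vm, polar Q v0 v = 0) (hsup : Vm ⊔ R ∙ v0 ⊔ Vp = ⊤) :
    Submodule.span R (normalMonomials Q Vp Vm v0) = ⊤ := by
  set S := Submodule.span R (normalMonomials Q Vp Vm v0)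
  have hι : ∀ (v : V), ∀ x ∈ S, ι Q v * x ∈ S := fun v x hx => by
    refine mul_mem_span_normalMonomials (fun lp r lq => ?_) hx
    refine Submodule.mem_of_sup_span_singleton_sup_eq_top
      (W := S.comap (LinearMap.mulRight R (normalMonomial Q v0 lp r lq) ∘ₗ ι Q)) hsup
      (fun a ha => ι_mul_normalMonomial_mem_span hm ⟨a, ha⟩ lp r lq) ?_ (fun b hb => ?_) v
    · change ι Q v0 * _ ∈ S
      rw [ι_mul_normalMonomial_self hp]
      exact S.smul_mem _ (normalMonomial_mem_span _ _ _)
    · change ι Q (⟨b, hb⟩ : Vp) * _ ∈ S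
      rw [ι_mul_normalMonomial]
      exact normalMonomial_mem_span _ _ _
  have hmul : ∀ y, ∀ x ∈ S, y * x ∈ S := fun y => by
    induction y using CliffordAlgebra.induction with
    | algebraMap c => exact fun x hx => Algebra.smul_def c x ▸ S.smul_mem c hx
    | ι v => exact hι v
    | mul y z hy hz => exact fun x hx => (mul_assoc y z x).symm ▸ hy _ (hz x hx)
    | add y z hy hz => exact fun x hx => (add_mul y z x).symm ▸ add_mem (hy x hx) (hz x hx)
  have hone : (1 : CliffordAlgebra Q) ∈ S := by
    simpa [normalMonomial] using normalMonomial_mem_span (Q := Q) (v0 := v0) ([] : List Vp) 0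
      ([] : List Vm)
  exact eq_top_iff.2 fun y _ => mul_one y ▸ hmul y 1 hone

variable (Q Vp Vm v0) in
def IsVacuumExpectation (F : CliffordAlgebra Q →ₗ[R] R) : Prop :=
  ∀ (lp : List Vp) (r : ℕ) (lq : List Vm), lp ≠ [] ∨ lq ≠ [] →
    F (normalMonomial Q v0 lp r lq) = 0

namespace IsVacuumExpectation

variable {F : CliffordAlgebra Q →ₗ[R] R}

lemma apply_mul_ι_eq_zero (hF : IsVacuumExpectation Q Vp Vm v0 F)
    (hspan : Submodule.span R (normalMonomials Q Vp Vm v0) = ⊤) (a : Vm) (x : CliffordAlgebra Q) :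
    F (x * ι Q a) = 0 := by
  have : F ∘ₗ LinearMap.mulRight R (ι Q a) = 0 := by
    refine LinearMap.ext_on hspan ?_
    rintro _ ⟨⟨lp, r, lq⟩, rfl⟩
    simp [normalMonomial_mul_ι,
      hF lp r _ (Or.inr (List.append_ne_nil_of_right_ne_nil _ (List.cons_ne_nil _ _)))]
  exact LinearMap.congr_fun this x

lemma apply_ι_mul_eq_zero (hF : IsVacuumExpectation Q Vp Vm v0 F)
    (hspan : Submodule.span R (normalMonomials Q Vp Vm v0) = ⊤) (b : Vp) (x : CliffordAlgebra Q) :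
    F (ι Q b * x) = 0 := by
  have : F ∘ₗ LinearMap.mulLeft R (ι Q b) = 0 := by
    refine LinearMap.ext_on hspan ?_
    rintro _ ⟨⟨lp, r, lq⟩, rfl⟩
    simp [ι_mul_normalMonomial, hF _ r lq (Or.inl (List.cons_ne_nil _ _))]
  exact LinearMap.congr_fun this x

lemma apply_ι_self_mul_comm (hF : IsVacuumExpectation Q Vp Vm v0 F)
    (hp : ∀ v ∈ Vp, polar Q v0 v = 0) (hm : ∀ v ∈ Vm, polar Q v0 v = 0)
    (hspan : Submodule.span R (normalMonomials Q Vp Vm v0) = ⊤) (x : CliffordAlgebra Q) :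
    F (ι Q v0 * x) = F (x * ι Q v0) := by
  have : F ∘ₗ LinearMap.mulLeft R (ι Q v0) = F ∘ₗ LinearMap.mulRight R (ι Q v0) := by
    refine LinearMap.ext_on hspan ?_
    rintro _ ⟨⟨lp, r, lq⟩, rfl⟩
    simp only [LinearMap.comp_apply, LinearMap.mulLeft_apply, LinearMap.mulRight_apply,
      ι_mul_normalMonomial_self hp, normalMonomial_mul_ι_self hm, map_smul]
    by_cases h : lp = [] ∧ lq = []
    · obtain ⟨rfl, rfl⟩ := h
      rfl
    · rw [hF _ _ _ (not_and_or.1 h), smul_zero, smul_zero]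
  exact LinearMap.congr_fun this x

end IsVacuumExpectation

end NormalOrder

section Field

variable {K : Type*} [Field K] {V : Type*} [AddCommGroup V] [Module K V]
  {Q : QuadraticForm K V} {F : CliffordAlgebra Q →ₗ[K] K}

theorem apply_ιProd_mul_ι_of_mul_eq_mul (hF1 : F 1 = 1) {α β : K} (hαβ : α + β ≠ 0) {w : V}
    (hw : ∀ x, α * F (ι Q w * x) = β * F (x * ι Q w)) {t : ℕ} (g : Fin (2 * t + 1) → V) :
    F (ιProd Q g * ι Q w) = ∑ k : Fin (2 * t + 1),
      (-1) ^ (k : ℕ) * F (ι Q (g k) * ι Q w) * F (ιProd Q fun i => g (k.succAbove i)) := by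
  have hpair : ∀ u, (α + β) * F (ι Q u * ι Q w) = α * polar Q w u := fun u => by
    have := congrArg F (ι_mul_ι_add_swap (Q := Q) w u)
    rw [map_add, Algebra.algebraMap_eq_smul_one, map_smul, hF1, smul_eq_mul, mul_one] at this
    linear_combination α * this - hw (ι Q u)
  have hexp := congrArg F (ι_mul_ιProd (Q := Q) w g)
  rw [Odd.neg_one_pow ⟨t, rfl⟩] at hexp
  simp only [map_add, map_smul, map_sum, smul_eq_mul] at hexp
  apply mul_left_cancel₀ hαβ
  calc (α + β) * F (ιProd Q g * ι Q w)
      = ∑ k : Fin (2 * t + 1), α * ((-1) ^ (k : ℕ) * polar Q w (g k) *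
          F (ιProd Q fun i => g (k.succAbove i))) := by
        rw [← Finset.mul_sum]
        linear_combination α * hexp - hw _
    _ = _ := by
        rw [Finset.mul_sum]
        refine Finset.sum_congr rfl fun k _ => ?_
        linear_combination
          -(-1) ^ (k : ℕ) * F (ιProd Q fun i => g (k.succAbove i)) * hpair (g k)

variable {Vp Vm : Submodule K V} {v0 : V}

theorem IsVacuumExpectation.apply_ιProd_mul_ι [NeZero (2 : K)]
    (hF : IsVacuumExpectation Q Vp Vm v0 F) (hF1 : F 1 = 1)
    (hp : ∀ v ∈ Vp, polar Q v0 v = 0) (hm : ∀ v ∈ Vm, polar Q v0 v = 0)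
    (hsup : Vm ⊔ K ∙ v0 ⊔ Vp = ⊤) {t : ℕ} (g : Fin (2 * t + 1) → V) (w : V) :
    F (ιProd Q g * ι Q w) = ∑ k : Fin (2 * t + 1),
      (-1) ^ (k : ℕ) * F (ι Q (g k) * ι Q w) * F (ιProd Q fun i => g (k.succAbove i)) := by
  have hspan := span_normalMonomials_eq_top hp hm hsup
  let L : V →ₗ[K] K := F ∘ₗ LinearMap.mulLeft K (ιProd Q g) ∘ₗ ι Q
  let L' : V →ₗ[K] K := ∑ k : Fin (2 * t + 1),
    ((-1) ^ (k : ℕ) * F (ιProd Q fun i => g (k.succAbove i))) •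
      (F ∘ₗ LinearMap.mulLeft K (ι Q (g k)) ∘ₗ ι Q)
  have hmem : ∀ u, u ∈ LinearMap.eqLocus L L' ↔
      F (ιProd Q g * ι Q u) = ∑ k : Fin (2 * t + 1),
        (-1) ^ (k : ℕ) * F (ι Q (g k) * ι Q u) * F (ιProd Q fun i => g (k.succAbove i)) := by
    intro u
    simp only [LinearMap.mem_eqLocus, L, L', LinearMap.comp_apply, LinearMap.mulLeft_apply,
      LinearMap.sum_apply, LinearMap.smul_apply, smul_eq_mul]
    exact Eq.congr_right (Finset.sum_congr rfl fun k _ => by ring)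
  have hL : ∀ {α β : K}, α + β ≠ 0 → ∀ {u : V},
      (∀ x, α * F (ι Q u * x) = β * F (x * ι Q u)) → u ∈ LinearMap.eqLocus L L' :=
    fun hαβ _ hu => (hmem _).2 (apply_ιProd_mul_ι_of_mul_eq_mul hF1 hαβ hu g)
  refine (hmem w).1 <| Submodule.mem_of_sup_span_singleton_sup_eq_top hsup
    (fun a ha => hL (α := 0) (β := 1) (by simp) fun x => ?_)
    (hL (α := 1) (β := 1) (by rw [one_add_one_eq_two]; exact two_ne_zero) fun x => ?_)
    (fun b hb => hL (α := 1) (β := 0) (by simp) fun x => ?_) w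
  · simp [hF.apply_mul_ι_eq_zero hspan ⟨a, ha⟩]
  · rw [hF.apply_ι_self_mul_comm hp hm hspan]
  · simp [hF.apply_ι_mul_eq_zero hspan ⟨b, hb⟩]

end Field

end CliffordAlgebra

theorem statement8_general {V : Type*} [AddCommGroup V] [Module ℂ V]
    (Q : QuadraticForm ℂ V) (Vp Vm : Submodule ℂ V) (v0 : V)
    (hdirect : DirectSum.IsInternal
      (fun i : Fin 3 => ![Vm, Submodule.span ℂ {v0}, Vp] i))
    (horth : ∀ v ∈ Vp ⊔ Vm, QuadraticMap.polar (⇑Q) v0 v = 0)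
    (F : CliffordAlgebra Q →ₗ[ℂ] ℂ) (hF1 : F 1 = 1)
    (hFvan : ∀ (p q r : ℕ) (fp : Fin p → Vp) (fm : Fin q → Vm), p ≠ 0 ∨ q ≠ 0 →
      F ((List.ofFn fun i => ι Q (fp i : V)).prod * (ι Q v0) ^ r *
          (List.ofFn fun j => ι Q (fm j : V)).prod) = 0)
    (n : ℕ) (f : Fin (2 * n) → V) :
    F (List.ofFn fun i => ι Q (f i)).prod =
      pfaffian n (Matrix.of fun k j : Fin (2 * n) =>
        if k < j then F (ι Q (f k) * ι Q (f j))
        else if j < k then -F (ι Q (f j) * ι Q (f k)) else 0) := by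
  have hsup : Vm ⊔ ℂ ∙ v0 ⊔ Vp = ⊤ := by
    simpa [iSup_fin_three] using hdirect.submodule_iSup_eq_top
  have hp : ∀ v ∈ Vp, polar Q v0 v = 0 := fun v hv => horth v (Submodule.mem_sup_left hv)
  have hm : ∀ v ∈ Vm, polar Q v0 v = 0 := fun v hv => horth v (Submodule.mem_sup_right hv)
  have hF : IsVacuumExpectation Q Vp Vm v0 F := fun lp r lq h => by
    have := hFvan _ _ r (fun i => lp[(i : ℕ)]) (fun j => lq[(j : ℕ)]) (by simpa using h)
    rw [List.ofFn_getElem_eq_map lp (fun a : Vp => ι Q (a : V)),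
      List.ofFn_getElem_eq_map lq (fun a : Vm => ι Q (a : V))] at this
    rwa [normalMonomial, List.map_map, List.map_map]
  change F (ιProd Q f) = pfaffian n (Matrix.skewOfUpper fun k j => F (ι Q (f k) * ι Q (f j)))
  induction n with
  | zero => exact hF1
  | succ n ih =>
    rw [ιProd_succ', hF.apply_ιProd_mul_ι hF1 hp hm hsup, pfaffian]
    refine Finset.sum_congr rfl fun k _ => ?_
    rw [Matrix.skewOfUpper_apply_of_lt _ (Fin.castSucc_lt_last k),
      Matrix.submatrix_skewOfUpper (e := fun i => (k.succAbove i).castSucc) _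
        (Fin.strictMono_castSucc.comp (Fin.strictMono_succAbove k)),
      ih]
    rfl

/-- Wick's theorem: let `V = V⁻ ⊕ ℂv₀ ⊕ V⁺` with `V±` maximal
isotropic for the symmetric bilinear form `⟨u,w⟩ = polar Q u w`, `⟨v₀,v₀⟩ = 2`,
`v₀ ⊥ (V⁺ ⊕ V⁻)`.  If `F : Cl(V) → ℂ` is linear with `F(1) = 1` and
`F(f₁⁺⋯f_p⁺ v₀^r f₁⁻⋯f_q⁻) = 0` whenever `p ≠ 0` or `q ≠ 0`, then
`F(f₁⋯f_{2n}) = Pf[F(f_k f_j)]`. -/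
theorem statement8 {V : Type*} [AddCommGroup V] [Module ℂ V]
    (Q : QuadraticForm ℂ V) (Vp Vm : Submodule ℂ V) (v0 : V)
    (hdirect : DirectSum.IsInternal
      (fun i : Fin 3 => ![Vm, Submodule.span ℂ {v0}, Vp] i))
    (hv0 : QuadraticMap.polar (⇑Q) v0 v0 = 2)
    (horth : ∀ v ∈ Vp ⊔ Vm, QuadraticMap.polar (⇑Q) v0 v = 0)
    (hisoP : ∀ u ∈ Vp, ∀ w ∈ Vp, QuadraticMap.polar (⇑Q) u w = 0)
    (hisoM : ∀ u ∈ Vm, ∀ w ∈ Vm, QuadraticMap.polar (⇑Q) u w = 0)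
    (hmaxP : ∀ W : Submodule ℂ V, Vp ≤ W →
      (∀ u ∈ W, ∀ w ∈ W, QuadraticMap.polar (⇑Q) u w = 0) → W = Vp)
    (hmaxM : ∀ W : Submodule ℂ V, Vm ≤ W →
      (∀ u ∈ W, ∀ w ∈ W, QuadraticMap.polar (⇑Q) u w = 0) → W = Vm)
    (F : CliffordAlgebra Q →ₗ[ℂ] ℂ) (hF1 : F 1 = 1)
    (hFvan : ∀ (p q r : ℕ) (fp : Fin p → Vp) (fm : Fin q → Vm), p ≠ 0 ∨ q ≠ 0 →
      F ((List.ofFn fun i => ι Q (fp i : V)).prod * (ι Q v0) ^ r *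
          (List.ofFn fun j => ι Q (fm j : V)).prod) = 0)
    (n : ℕ) (f : Fin (2 * n) → V) :
    F (List.ofFn fun i => ι Q (f i)).prod =
      pfaffian n (Matrix.of fun k j : Fin (2 * n) =>
        if k < j then F (ι Q (f k) * ι Q (f j))
        else if j < k then -F (ι Q (f j) * ι Q (f k)) else 0) :=
  statement8_general Q Vp Vm v0 hdirect horth F hF1 hFvan n f
end

section
/- Let α > 0, 0 < ξ < 1, and let Φ(x,y) denote the static Pfaffian kernel Φ_{α,ξ}(x,y) = (−1)^{x∧0 + y∨0} Σ_{m=0}^∞ 2^{−δ(m)} φ_m(x) φ_m(−y), where φ_m = φ_m(·; α, ξ) satisfies the symmetry φ_m(x) = (−1)^{x+m} φ_{−m}(−x) and the closed-form (Christoffel–Darboux type) formula Φ(x,y) = (−1)^{x∧0+y∧0} (√(αξ)/(2(1−ξ))) · [φ₀(x)(φ₁(y) − φ_{−1}(y)) − φ₀(y)(φ₁(x) − φ_{−1}(x))]/(x+y). Then Φ satisfies the reduction identities: (1) Φ(x,−y) = Φ(y,−x) for all x,y ∈ ℤ; (2) Φ(x,−y) = −Φ(−x,y) for x ≠ y; (3)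 (x+y)·Φ(x,y) = (x−y)·Φ(x,−y) for all x,y ∈ ℤ. -/
/-! Write `N(x,y) = φ₀(x) ψ(y) − φ₀(y) ψ(x)`, `ψ = φ₁ − φ₋₁`, for the numerator of the closed
form and `R(x,y)` for the closed form multiplied by `x + y`. The symmetry of `φ` gives `φ₀` and `ψ`
the sign `(−1)^x` under `x ↦ −x`, so `N(x,−y) = (−1)^y N(x,y)`; as `min (−y) 0 ≡ min y 0 + y`
(mod 2), the sign prefactor changes by the same factor, so `R` is even in each variable. Since `N`
is antisymmetric, `R` vanishes on the diagonal, hence also on the anti-diagonal, where the closed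
form says nothing; thus `(x+y) Φ(x,y) = R(x,y)` for all `x, y`, and (2), (3) follow from the
evenness of `R`. Identity (1) needs only the series. -/

lemma neg_one_zpow_eq_of_even_sub {a b : ℤ} (h : Even (a - b)) : (-1 : ℝ) ^ a = (-1) ^ b := by
  rw [← sub_add_cancel a b, zpow_add₀ (by norm_num), h.neg_one_zpow, one_mul]

lemma neg_one_zpow_mul_self (t : ℤ) : (-1 : ℝ) ^ t * (-1) ^ t = 1 := by
  rw [← zpow_add₀ (by norm_num)]
  exact Even.neg_one_zpow ⟨t, rfl⟩

lemma neg_one_zpow_add_min_neg (x y : ℤ) :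
    (-1 : ℝ) ^ (x + min (-y) 0) = (-1) ^ (x + min y 0) * (-1) ^ y := by
  rw [← zpow_add₀ (by norm_num)]
  exact neg_one_zpow_eq_of_even_sub ⟨-y, by omega⟩

namespace StaticPfaffian

variable (φ : ℤ → ℤ → ℝ)

def cdNumerator (x y : ℤ) : ℝ :=
  φ 0 x * (φ 1 y - φ (-1) y) - φ 0 y * (φ 1 x - φ (-1) x)

noncomputable def reducedKernel (c : ℝ) (x y : ℤ) : ℝ :=
  (-1 : ℝ) ^ (min x 0 + min y 0) * c * cdNumerator φ x y

lemma cdNumerator_swap (x y : ℤ) : cdNumerator φ y x = -cdNumerator φ x y := by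
  unfold cdNumerator; ring

lemma cdNumerator_self (x : ℤ) : cdNumerator φ x x = 0 := by
  unfold cdNumerator; ring

lemma reducedKernel_swap (c : ℝ) (x y : ℤ) : reducedKernel φ c y x = -reducedKernel φ c x y := by
  unfold reducedKernel; rw [cdNumerator_swap, add_comm]; ring

lemma reducedKernel_self (c : ℝ) (x : ℤ) : reducedKernel φ c x x = 0 := by
  rw [reducedKernel, cdNumerator_self, mul_zero]

variable {φ} (hφ : ∀ m x : ℤ, φ m x = (-1 : ℝ) ^ (x + m) * φ (-m) (-x))
include hφ

lemma phi_zero_neg (x : ℤ) : φ 0 (-x) = (-1) ^ x * φ 0 x := by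
  rw [hφ 0 x, add_zero, neg_zero, ← mul_assoc, neg_one_zpow_mul_self, one_mul]

lemma phi_one_sub_phi_neg_one_neg (x : ℤ) :
    φ 1 (-x) - φ (-1) (-x) = (-1) ^ x * (φ 1 x - φ (-1) x) := by
  have h₁ : (-1 : ℝ) ^ (x + 1) = -(-1) ^ x := by
    rw [zpow_add_one₀ (by norm_num), mul_neg_one]
  have h₁' : (-1 : ℝ) ^ (x + -1) = -(-1) ^ x := by
    rw [neg_one_zpow_eq_of_even_sub (b := x + 1) ⟨-1, by omega⟩, h₁]
  rw [hφ 1 x, hφ (-1) x, neg_neg, h₁, h₁']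
  linear_combination (φ (-1) (-x) - φ 1 (-x)) * neg_one_zpow_mul_self x

lemma cdNumerator_neg_right (x y : ℤ) :
    cdNumerator φ x (-y) = (-1) ^ y * cdNumerator φ x y := by
  rw [cdNumerator, cdNumerator, phi_zero_neg hφ, phi_one_sub_phi_neg_one_neg hφ]; ring

lemma reducedKernel_neg_right (c : ℝ) (x y : ℤ) :
    reducedKernel φ c x (-y) = reducedKernel φ c x y := by
  rw [reducedKernel, reducedKernel, cdNumerator_neg_right hφ, neg_one_zpow_add_min_neg]
  linear_combination (-1 : ℝ) ^ (min x 0 + min y 0) * c * cdNumerator φ x y *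
    neg_one_zpow_mul_self y

lemma reducedKernel_neg_left (c : ℝ) (x y : ℤ) :
    reducedKernel φ c (-x) y = reducedKernel φ c x y := by
  rw [← neg_neg (reducedKernel φ c (-x) y), ← reducedKernel_swap, reducedKernel_neg_right hφ,
    reducedKernel_swap, neg_neg]

lemma add_mul_eq_reducedKernel {Φ : ℤ → ℤ → ℝ} {c : ℝ}
    (hclosed : ∀ x y : ℤ, x + y ≠ 0 → Φ x y =
      (-1 : ℝ) ^ (min x 0 + min y 0) * c * (cdNumerator φ x y / ((x : ℝ) + (y : ℝ))))
    (x y : ℤ) : ((x : ℝ) + y) * Φ x y = reducedKernel φ c x y := by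
  by_cases hxy : x + y = 0
  · obtain rfl : y = -x := by omega
    rw [reducedKernel_neg_right hφ, reducedKernel_self]
    push_cast
    ring
  · have hxy' : (x : ℝ) + y ≠ 0 := by exact_mod_cast hxy
    rw [hclosed x y hxy, reducedKernel]
    field_simp

end StaticPfaffian

lemma series_kernel_apply_neg_symm {Φ : ℤ → ℤ → ℝ} (w : ℕ → ℝ) (φ : ℤ → ℤ → ℝ)
    (hseries : ∀ x y : ℤ, Φ x y =
      (-1 : ℝ) ^ (min x 0 + max y 0) * ∑' m : ℕ, w m * φ (m : ℤ) x * φ (m : ℤ) (-y))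
    (x y : ℤ) : Φ x (-y) = Φ y (-x) := by
  have hsign : (-1 : ℝ) ^ (min x 0 + max (-y) 0) = (-1) ^ (min y 0 + max (-x) 0) :=
    neg_one_zpow_eq_of_even_sub ⟨min x 0 - min y 0, by omega⟩
  rw [hseries, hseries, neg_neg, neg_neg, hsign]
  exact congrArg _ (tsum_congr fun m => by ring)

open StaticPfaffian in
theorem statement19_general (α ξ : ℝ)
    (φ : ℤ → ℤ → ℝ)
    (hφsymm : ∀ m x : ℤ, φ m x = (-1 : ℝ) ^ (x + m) * φ (-m) (-x))
    (Φ : ℤ → ℤ → ℝ)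
    (hseries : ∀ x y : ℤ, Φ x y =
      (-1 : ℝ) ^ (min x 0 + max y 0) *
        ∑' m : ℕ, (if m = 0 then (2 : ℝ)⁻¹ else 1) * φ (m : ℤ) x * φ (m : ℤ) (-y))
    (hclosed : ∀ x y : ℤ, x + y ≠ 0 → Φ x y =
      (-1 : ℝ) ^ (min x 0 + min y 0) * (Real.sqrt (α * ξ) / (2 * (1 - ξ))) *
        ((φ 0 x * (φ 1 y - φ (-1) y) - φ 0 y * (φ 1 x - φ (-1) x)) /
          ((x : ℝ) + (y : ℝ)))) :
    (∀ x y : ℤ, Φ x (-y) = Φ y (-x)) ∧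
    (∀ x y : ℤ, x ≠ y → Φ x (-y) = -Φ (-x) y) ∧
    (∀ x y : ℤ, ((x : ℝ) + (y : ℝ)) * Φ x y = ((x : ℝ) - (y : ℝ)) * Φ x (-y)) := by
  have hR := add_mul_eq_reducedKernel hφsymm hclosed
  refine ⟨series_kernel_apply_neg_symm _ φ hseries, fun x y hxy => ?_, fun x y => ?_⟩
  · have hxy' : (x : ℝ) - y ≠ 0 := sub_ne_zero.2 (by exact_mod_cast hxy)
    have h₁ := hR x (-y)
    have h₂ := hR (-x) y
    rw [reducedKernel_neg_right hφsymm] at h₁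
    rw [reducedKernel_neg_left hφsymm] at h₂
    push_cast at h₁ h₂
    exact mul_left_cancel₀ hxy' (by linear_combination h₁ - h₂)
  · have h₁ := hR x y
    have h₂ := hR x (-y)
    rw [reducedKernel_neg_right hφsymm] at h₂
    push_cast at h₂
    linear_combination h₁ - h₂

/-- reduction identities for the static Pfaffian kernel
`Φ_{α,ξ}(x,y) = (−1)^{x∧0+y∨0} Σ_{m≥0} 2^{−δ(m)} φ_m(x) φ_m(−y)`, assuming the
symmetry `φ_m(x) = (−1)^{x+m} φ_{−m}(−x)` and the closed-form
(Christoffel–Darboux type) expression for `Φ` off the anti-diagonal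
(the anti-diagonal values being determined by the series, which is the
L'Hospital limit of the closed form):
(1) `Φ(x,−y) = Φ(y,−x)`;
(2) `Φ(x,−y) = −Φ(−x,y)` for `x ≠ y`;
(3) `(x+y)·Φ(x,y) = (x−y)·Φ(x,−y)`. -/
theorem statement19 (α ξ : ℝ) (hα : 0 < α) (hξ0 : 0 < ξ) (hξ1 : ξ < 1)
    (φ : ℤ → ℤ → ℝ)
    (hφsymm : ∀ m x : ℤ, φ m x = (-1 : ℝ) ^ (x + m) * φ (-m) (-x))
    (Φ : ℤ → ℤ → ℝ)
    (hseries : ∀ x y : ℤ, Φ x y =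
      (-1 : ℝ) ^ (min x 0 + max y 0) *
        ∑' m : ℕ, (if m = 0 then (2 : ℝ)⁻¹ else 1) * φ (m : ℤ) x * φ (m : ℤ) (-y))
    (hclosed : ∀ x y : ℤ, x + y ≠ 0 → Φ x y =
      (-1 : ℝ) ^ (min x 0 + min y 0) * (Real.sqrt (α * ξ) / (2 * (1 - ξ))) *
        ((φ 0 x * (φ 1 y - φ (-1) y) - φ 0 y * (φ 1 x - φ (-1) x)) /
          ((x : ℝ) + (y : ℝ)))) :
    (∀ x y : ℤ, Φ x (-y) = Φ y (-x)) ∧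
    (∀ x y : ℤ, x ≠ y → Φ x (-y) = -Φ (-x) y) ∧
    (∀ x y : ℤ, ((x : ℝ) + (y : ℝ)) * Φ x y = ((x : ℝ) - (y : ℝ)) * Φ x (-y)) :=
  statement19_general α ξ φ hφsymm Φ hseries hclosed
end
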